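/- Let C be a negacyclic conference matrix of order v with first row (0, c_1, ..., c_{v-1}). If (1, c_1, ..., c_{q}) and (-1, c_1, ..., c_q) denote the first row with 0 replaced by +1 and -1 respectively (v = 1+q), then these two sequences form a negaperiodic Golay pair of length v. -/
import Mathlib


/-- Ordinary autocorrelation. -/
def AF (v : ℕ) (a : ℕ → ℤ) (k : ℕ) : ℤ :=
  ∑ i ∈ Finset.range (v - k), a i * a (i + k)

/-- Negaperiodic autocorrelation `NAF_a(k) = AF_a(k) - AF_a(v-k)`. -/
def NAF (v : ℕ) (a : ℕ → ℤ) (k : ℕ) : ℤ :=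
  AF v a k - AF v a (v - k)

/-- The negacyclic shift matrix `N` of order `v`. -/
def negaShift (v : ℕ) : Matrix (Fin v) (Fin v) ℤ :=
  Matrix.of fun i j => if (i : ℕ) + 1 = (j : ℕ) then 1
    else if (i : ℕ) = v - 1 ∧ (j : ℕ) = 0 then -1 else 0

/-- The negacyclic matrix of order `v` with first row `c`. -/
def negacyclic (v : ℕ) (c : ℕ → ℤ) : Matrix (Fin v) (Fin v) ℤ :=
  ∑ i ∈ Finset.range v, c i • (negaShift v) ^ i

lemma negaShift_pow (v : ℕ) : ∀ i, i ≤ v → ∀ x m : Fin v,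
    ((negaShift v) ^ i) x m =
      if (m : ℕ) = (x : ℕ) + i then 1
      else if (m : ℕ) + v = (x : ℕ) + i then -1 else 0 := by
  intro i
  induction i with
  | zero =>
    intro _ x m
    have hx := x.isLt
    have hm := m.isLt
    rw [pow_zero, Matrix.one_apply]
    simp only [Fin.ext_iff]
    split_ifs <;> omega
  | succ i ih =>
    intro hi x m
    have hi' : i ≤ v := Nat.le_of_succ_le hi
    have hiv : i < v := hi
    have hx := x.isLt
    have hm := m.isLt
    rw [pow_succ, Matrix.mul_apply]
    have key : ∀ y : Fin v, ((negaShift v) ^ i) x y * negaShift v y m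
        = (if (y : ℕ) = (x : ℕ) + i then 1
           else if (y : ℕ) + v = (x : ℕ) + i then -1 else 0) * negaShift v y m :=
      fun y => by rw [ih hi' x y]
    rw [Finset.sum_congr rfl (fun y _ => key y)]
    by_cases h : (x : ℕ) + i < v
    · set y0 : Fin v := ⟨(x : ℕ) + i, h⟩ with hy0
      rw [Finset.sum_eq_single_of_mem y0 (Finset.mem_univ y0)]
      · have hy0v : (y0 : ℕ) = (x : ℕ) + i := rfl
        rw [if_pos hy0v, one_mul]
        show (if (y0 : ℕ) + 1 = (m : ℕ) then (1:ℤ)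
          else if (y0 : ℕ) = v - 1 ∧ (m : ℕ) = 0 then -1 else 0) = _
        rw [hy0v]
        split_ifs <;> omega
      · intro y _ hy
        have h1 : (y : ℕ) ≠ (x : ℕ) + i := by
          intro hh
          exact hy (Fin.ext (by simpa using hh))
        have h2 : (y : ℕ) + v ≠ (x : ℕ) + i := by
          have := y.isLt; omega
        rw [if_neg h1, if_neg h2, zero_mul]
    · have h' : (x : ℕ) + i - v < v := by omega
      set y0 : Fin v := ⟨(x : ℕ) + i - v, h'⟩ with hy0
      rw [Finset.sum_eq_single_of_mem y0 (Finset.mem_univ y0)]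
      · have hy0v : (y0 : ℕ) = (x : ℕ) + i - v := rfl
        have hne : (y0 : ℕ) ≠ (x : ℕ) + i := by omega
        have heq : (y0 : ℕ) + v = (x : ℕ) + i := by omega
        rw [if_neg hne, if_pos heq]
        show (-1 : ℤ) * (if (y0 : ℕ) + 1 = (m : ℕ) then (1:ℤ)
          else if (y0 : ℕ) = v - 1 ∧ (m : ℕ) = 0 then -1 else 0) = _
        rw [hy0v]
        split_ifs <;> omega
      · intro y _ hy
        have hyv := y.isLt
        have hyne : (y : ℕ) ≠ (x : ℕ) + i - v := by
          intro hh
          exact hy (Fin.ext (by simpa using hh))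
        have h1 : (y : ℕ) ≠ (x : ℕ) + i := by omega
        have h2 : (y : ℕ) + v ≠ (x : ℕ) + i := by omega
        rw [if_neg h1, if_neg h2, zero_mul]

lemma negacyclic_apply (v : ℕ) (c : ℕ → ℤ) (x m : Fin v) :
    negacyclic v c x m =
      if (x : ℕ) ≤ (m : ℕ) then c ((m : ℕ) - (x : ℕ))
      else -c ((m : ℕ) + v - (x : ℕ)) := by
  have hx := x.isLt
  have hm := m.isLt
  unfold negacyclic
  rw [Matrix.sum_apply]
  have key : ∀ i ∈ Finset.range v, (c i • (negaShift v) ^ i) x m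
      = c i * (if (m : ℕ) = (x : ℕ) + i then 1
          else if (m : ℕ) + v = (x : ℕ) + i then -1 else 0) := by
    intro i hi
    rw [Matrix.smul_apply, negaShift_pow v i (Nat.le_of_lt (Finset.mem_range.mp hi)) x m,
      smul_eq_mul]
  rw [Finset.sum_congr rfl key]
  by_cases h : (x : ℕ) ≤ (m : ℕ)
  · rw [if_pos h]
    rw [Finset.sum_eq_single_of_mem ((m : ℕ) - (x : ℕ))
      (Finset.mem_range.mpr (by omega))]
    · rw [if_pos (by omega), mul_one]
    · intro i hi hne
      have hi' := Finset.mem_range.mp hi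
      rw [if_neg (by omega), if_neg (by omega), mul_zero]
  · rw [if_neg h]
    rw [Finset.sum_eq_single_of_mem ((m : ℕ) + v - (x : ℕ))
      (Finset.mem_range.mpr (by omega))]
    · rw [if_neg (by omega), if_pos (by omega)]
      ring
    · intro i hi hne
      have hi' := Finset.mem_range.mp hi
      rw [if_neg (by omega), if_neg (by omega), mul_zero]

/-- if `C` is a negacyclic conference matrix of order `v` with first row
`(0, c_1, ..., c_{v-1})`, then the two sequences obtained by replacing the initial `0`
by `+1` and by `-1` form a negaperiodic Golay pair of length `v`. -/
theorem negacyclic_conference_gives_ngpair (v : ℕ) (hv : 0 < v) (c : ℕ → ℤ)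
    (hc0 : c 0 = 0)
    (hcent : ∀ i, 0 < i → i < v → c i = 1 ∨ c i = -1)
    (hconf : (negacyclic v c) * (negacyclic v c).transpose =
      ((v : ℤ) - 1) • (1 : Matrix (Fin v) (Fin v) ℤ)) :
    (∀ i, i < v →
      ((fun i => if i = 0 then (1 : ℤ) else c i) i = 1 ∨
        (fun i => if i = 0 then (1 : ℤ) else c i) i = -1) ∧
      ((fun i => if i = 0 then (-1 : ℤ) else c i) i = 1 ∨
        (fun i => if i = 0 then (-1 : ℤ) else c i) i = -1)) ∧
    (∀ k, 0 < k → k < v →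
      NAF v (fun i => if i = 0 then (1 : ℤ) else c i) k +
      NAF v (fun i => if i = 0 then (-1 : ℤ) else c i) k = 0) := by
  constructor
  · intro i hiv
    by_cases hi : i = 0
    · subst hi; simp
    · have h := hcent i (Nat.pos_of_ne_zero hi) hiv
      simp only [if_neg hi]
      exact ⟨h, h⟩
  · -- main part
    have hNAFc : ∀ k, 0 < k → k < v → NAF v c k = 0 := by
      intro k hk0 hkv
      have hK : k < v := hkv
      have hmain := congrFun (congrFun hconf ⟨0, hv⟩) ⟨k, hkv⟩
      rw [Matrix.mul_apply, Matrix.smul_apply, Matrix.one_apply_ne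
        (by simp [Fin.ext_iff]; omega), smul_zero] at hmain
      have hterm : ∀ j : Fin v,
          negacyclic v c ⟨0, hv⟩ j * (negacyclic v c).transpose j ⟨k, hkv⟩
          = c (j : ℕ) * (if k ≤ (j : ℕ) then c ((j : ℕ) - k)
              else -c ((j : ℕ) + v - k)) := by
        intro j
        rw [Matrix.transpose_apply, negacyclic_apply, negacyclic_apply]
        simp
      rw [Finset.sum_congr rfl (fun j _ => hterm j)] at hmain
      rw [Fin.sum_univ_eq_sum_range (fun j => c j *
        (if k ≤ j then c (j - k) else -c (j + v - k))) v] at hmain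
      rw [Finset.range_eq_Ico, ← Finset.sum_Ico_consecutive _ (Nat.zero_le k) hkv.le,
        ← Finset.range_eq_Ico, Finset.sum_Ico_eq_sum_range] at hmain
      have h1 : (∑ i ∈ Finset.range k, c i *
          (if k ≤ i then c (i - k) else -c (i + v - k))) = -AF v c (v - k) := by
        unfold AF
        rw [Nat.sub_sub_self (Nat.le_of_lt hkv), ← Finset.sum_neg_distrib]
        apply Finset.sum_congr rfl
        intro i hi
        have hi' := Finset.mem_range.mp hi
        rw [if_neg (by omega)]
        have : i + v - k = i + (v - k) := by omega
        rw [this]; ring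
      have h2 : (∑ i ∈ Finset.range (v - k), c (k + i) *
          (if k ≤ k + i then c (k + i - k) else -c (k + i + v - k))) = AF v c k := by
        unfold AF
        apply Finset.sum_congr rfl
        intro i hi
        rw [if_pos (by omega)]
        have : k + i - k = i := by omega
        rw [this]
        have : k + i = i + k := by omega
        rw [this]; ring
      rw [h1, h2] at hmain
      unfold NAF
      linarith
    intro k hk0 hkv
    set a : ℕ → ℤ := fun i => if i = 0 then (1 : ℤ) else c i with ha
    set b : ℕ → ℤ := fun i => if i = 0 then (-1 : ℤ) else c i with hb
    have hAF : ∀ j, 0 < j → AF v a j + AF v b j = 2 * AF v c j := by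
      intro j hj
      unfold AF
      rw [← Finset.sum_add_distrib, Finset.mul_sum]
      apply Finset.sum_congr rfl
      intro i _
      by_cases hi : i = 0
      · subst hi
        simp only [ha, hb, if_pos rfl, zero_add, if_neg hj.ne', hc0]
        ring
      · have hij : i + j ≠ 0 := by omega
        simp only [ha, hb, if_neg hi, if_neg hij]
        ring
    have hkv' : 0 < v - k := by omega
    have := hNAFc k hk0 hkv
    unfold NAF at this ⊢
    have e1 := hAF k hk0
    have e2 := hAF (v - k) hkv'
    linarith
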